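/- arXiv:2304.07028 — 4 statements merged into one kernel-verified Lean document; each statement's English description precedes it below -/
import Mathlib

section
/- Let n ≥ 1, 0 ≤ j ≤ n, and 0 ≤ i ≤ n−1. Then there exist j' with 0 ≤ j' ≤ n−1 and i' with 0 ≤ i' ≤ n such that (id × σ_i) ∘ E_j^{(n)} = E_{j'}^{(n-1)} ∘ (id × σ_{i'}) as maps Fin 2 × Fin (n+2) → Fin 2 × Fin n, where σ_k denotes the codegeneracy hitting k twice and E_j^{(k)}(m,r) = (m,r) if r ≤ j, (1,r−1) otherwise. -/
/-- `E_j^{(k)} : Δ¹ ⊗ Δ^{k+1} → Δ¹ ⊗ Δ^k` on vertices. -/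
def Emap (k j : ℕ) (hj : j ≤ k) (p : Fin 2 × Fin (k + 2)) : Fin 2 × Fin (k + 1) :=
  if h : (p.2 : ℕ) ≤ j then (p.1, ⟨(p.2 : ℕ), by omega⟩)
  else (1, ⟨(p.2 : ℕ) - 1, by omega⟩)

/-- The codegeneracy `σ_i : [k+1] → [k]`, the monotone surjection hitting `i` twice. -/
def codegen (k i : ℕ) (hi : i ≤ k) (r : Fin (k + 2)) : Fin (k + 1) :=
  if h : (r : ℕ) ≤ i then ⟨(r : ℕ), by omega⟩ else ⟨(r : ℕ) - 1, by omega⟩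

lemma Emap_fst (k j : ℕ) (hj : j ≤ k) (p : Fin 2 × Fin (k + 2)) :
    (((Emap k j hj p).1 : Fin 2) : ℕ) = if (p.2 : ℕ) ≤ j then (p.1 : ℕ) else 1 := by
  unfold Emap; split_ifs <;> rfl

lemma Emap_snd (k j : ℕ) (hj : j ≤ k) (p : Fin 2 × Fin (k + 2)) :
    (((Emap k j hj p).2 : Fin (k + 1)) : ℕ) =
      if (p.2 : ℕ) ≤ j then (p.2 : ℕ) else (p.2 : ℕ) - 1 := by
  unfold Emap; split_ifs <;> rfl

lemma codegen_val (k i : ℕ) (hi : i ≤ k) (r : Fin (k + 2)) :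
    ((codegen k i hi r : Fin (k + 1)) : ℕ) =
      if (r : ℕ) ≤ i then (r : ℕ) else (r : ℕ) - 1 := by
  unfold codegen; split_ifs <;> rfl

/-- For `n = m + 1 ≥ 1`, `0 ≤ j ≤ n` and `0 ≤ i ≤ n - 1`, there exist `j' ≤ n - 1` and
`i' ≤ n` with `(id × σ_i) ∘ E_j^{(n)} = E_{j'}^{(n-1)} ∘ (id × σ_{i'})`. -/
theorem Emap_codegen_degenerate (m j i : ℕ) (hj : j ≤ m + 1) (hi : i ≤ m) :
    ∃ (j' : ℕ) (hj' : j' ≤ m) (i' : ℕ) (hi' : i' ≤ m + 1),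
      ∀ p : Fin 2 × Fin (m + 3),
        ((Emap (m + 1) j hj p).1, codegen m i hi (Emap (m + 1) j hj p).2) =
          Emap m j' hj' (p.1, codegen (m + 1) i' hi' p.2) := by
  rcases lt_or_ge i j with h | h
  · refine ⟨j - 1, by omega, i, by omega, fun p => ?_⟩
    have h2 := (Emap (m + 1) j hj p).2.isLt
    rw [Prod.ext_iff, Fin.ext_iff, Fin.ext_iff]
    simp only [Emap_fst, Emap_snd, codegen_val]
    constructor <;> split_ifs <;> omega
  · refine ⟨j, by omega, i + 1, by omega, fun p => ?_⟩
    have h2 := (Emap (m + 1) j hj p).2.isLt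
    rw [Prod.ext_iff, Fin.ext_iff, Fin.ext_iff]
    simp only [Emap_fst, Emap_snd, codegen_val]
    constructor <;> split_ifs <;> omega
end

section
/- Let p : X ⥤ D be a functor of categories and consider the first projection P : Comma (𝟭 D) p ⥤ D. A morphism (g, h) : (d, x, u) ⟶ (d', x', u') in Comma (𝟭 D) p is cartesian with respect to P if and only if h : x ⟶ x' is an isomorphism in X. -/
/-!
If `φ.right` is invertible, a morphism `ψ` into the target of `φ` over `g ≫ φ.left` lifts uniquely
along `φ`, its right component being forced to be `ψ.right ≫ (φ.right)⁻¹`. Conversely, `φ`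
factors as the vertical morphism `(𝟙, φ.right)` followed by `(φ.left, 𝟙)`, which is cartesian by
the first part. If `φ` is cartesian, the vertical factor is then cartesian over an identity,
hence an isomorphism, and so is its right component `φ.right`.
-/

open CategoryTheory Functor

namespace CategoryTheory.Comma

universe v₁ v₂ v₃ u₁ u₂ u₃

variable {A : Type u₁} {B : Type u₂} {T : Type u₃} [Category.{v₁} A] [Category.{v₂} B]
  [Category.{v₃} T] {L : A ⥤ T} {R : B ⥤ T} {X Y : Comma L R}

lemma fst_isHomLift_iff {f : X.left ⟶ Y.left} {φ : X ⟶ Y} :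
    (fst L R).IsHomLift f φ ↔ φ.left = f :=
  ⟨fun _ => (IsHomLift.eq_of_isHomLift (fst L R) f φ).symm,
    fun h => h ▸ IsHomLift.map (fst L R) φ⟩

lemma fst_isStronglyCartesian_iff (φ : X ⟶ Y) :
    (fst L R).IsStronglyCartesian φ.left φ ↔
      ∀ (Z : Comma L R) (ψ : Z ⟶ Y) (g : Z.left ⟶ X.left),
        g ≫ φ.left = ψ.left → ∃! χ : Z ⟶ X, χ.left = g ∧ χ ≫ φ = ψ := by
  constructor
  · intro _ Z ψ g hg
    have : (fst L R).IsHomLift (g ≫ φ.left) ψ := fst_isHomLift_iff.2 hg.symm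
    simpa only [fst_isHomLift_iff] using
      IsStronglyCartesian.universal_property (fst L R) φ.left φ g _ rfl ψ
  · intro h
    have : (fst L R).IsHomLift φ.left φ := fst_isHomLift_iff.2 rfl
    refine ⟨fun {Z} g ψ hψ => ?_⟩
    simpa only [fst_isHomLift_iff] using h Z ψ g (fst_isHomLift_iff.1 hψ).symm

lemma fst_isStronglyCartesian_of_isIso_right (φ : X ⟶ Y) [IsIso φ.right] :
    (fst L R).IsStronglyCartesian φ.left φ := by
  refine (fst_isStronglyCartesian_iff φ).2 fun Z ψ g hg => ?_
  have w : L.map g ≫ X.hom = Z.hom ≫ R.map (ψ.right ≫ inv φ.right) := by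
    rw [← cancel_mono (R.map φ.right)]
    calc (L.map g ≫ X.hom) ≫ R.map φ.right = L.map (g ≫ φ.left) ≫ Y.hom := by simp
      _ = Z.hom ≫ R.map ψ.right := by rw [hg, ψ.w]
      _ = (Z.hom ≫ R.map (ψ.right ≫ inv φ.right)) ≫ R.map φ.right := by simp
  refine ⟨⟨g, ψ.right ≫ inv φ.right, w⟩, ⟨rfl, hom_ext _ _ hg (by simp)⟩, ?_⟩
  rintro χ ⟨rfl, rfl⟩
  exact hom_ext _ _ rfl (by simp)

def factorObj (φ : X ⟶ Y) : Comma L R := ⟨X.left, Y.right, X.hom ≫ R.map φ.right⟩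

def vertFactor (φ : X ⟶ Y) : X ⟶ factorObj φ where
  left := 𝟙 _
  right := φ.right
  w := by simp [factorObj]

def cartFactor (φ : X ⟶ Y) : factorObj φ ⟶ Y where
  left := φ.left
  right := 𝟙 _
  w := by simp [factorObj]

lemma vertFactor_comp_cartFactor (φ : X ⟶ Y) : vertFactor φ ≫ cartFactor φ = φ :=
  hom_ext _ _ (Category.id_comp _) (Category.comp_id _)

lemma isIso_right_of_fst_isStronglyCartesian (φ : X ⟶ Y)
    [(fst L R).IsStronglyCartesian φ.left φ] : IsIso φ.right := by
  have : IsIso (cartFactor φ).right := inferInstanceAs (IsIso (𝟙 Y.right))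
  have : (fst L R).IsStronglyCartesian φ.left (cartFactor φ) :=
    fst_isStronglyCartesian_of_isIso_right (cartFactor φ)
  have : (fst L R).IsStronglyCartesian (𝟙 X.left ≫ φ.left) (vertFactor φ ≫ cartFactor φ) := by
    rwa [Category.id_comp, vertFactor_comp_cartFactor]
  have : (fst L R).IsHomLift (𝟙 X.left) (vertFactor φ) := fst_isHomLift_iff.2 rfl
  have : (fst L R).IsStronglyCartesian (𝟙 X.left) (vertFactor φ) :=
    IsStronglyCartesian.of_comp (fst L R) (g := φ.left) (ψ := cartFactor φ)
  have : IsIso (vertFactor φ) := IsStronglyCartesian.isIso_of_base_isIso (fst L R) (𝟙 X.left) _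
  exact inferInstanceAs (IsIso (vertFactor φ).right)

lemma fst_isStronglyCartesian_iff_isIso_right (φ : X ⟶ Y) :
    (fst L R).IsStronglyCartesian φ.left φ ↔ IsIso φ.right :=
  ⟨fun _ => isIso_right_of_fst_isStronglyCartesian φ,
    fun _ => fst_isStronglyCartesian_of_isIso_right φ⟩

end CategoryTheory.Comma

/-- A morphism `φ = (g, h) : (d, x, u) ⟶ (d', x', u')` in `Comma (𝟭 D) p` is cartesian with
respect to the first projection (every `ψ` into the same target lying over a factorization
`g₀ ≫ g` factors uniquely through `φ` via a morphism over `g₀`) if and only if its second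
component `h` is an isomorphism in `X`. -/
theorem comma_fst_cartesian_iff {X D : Type*} [Category X] [Category D] (p : X ⥤ D)
    (A B : Comma (𝟭 D) p) (φ : A ⟶ B) :
    (∀ (Z : Comma (𝟭 D) p) (ψ : Z ⟶ B) (g₀ : Z.left ⟶ A.left),
        g₀ ≫ φ.left = ψ.left → ∃! χ : Z ⟶ A, χ.left = g₀ ∧ χ ≫ φ = ψ) ↔
      IsIso φ.right :=
  (Comma.fst_isStronglyCartesian_iff φ).symm.trans
    (Comma.fst_isStronglyCartesian_iff_isIso_right φ)
end

section
/- Let F : A ⥤ C and G : B ⥤ C be functors of categories. Let L(F,G) be the category whose objects are tuples (a, b, c, α : F a ⟶ c, β : G b ⟶ c) and whose morphisms (a,b,c,α,β) ⟶ (a',b',c',α',β') are triples (f : a ⟶ a', g : b ⟶ b', h : c ⟶ c') satisfying h ∘ α = α' ∘ F f and h ∘ β = β' ∘ G g. Then the full subcategory of L(F,G) spanned by objects for which β is an isomorphism is equivalent to the comma category Comma F G (whose objects are (a, b, α : F a ⟶ G b)). -/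
open CategoryTheory

universe v₁ v₂ v₃ u₁ u₂ u₃

variable {A : Type u₁} {B : Type u₂} {C : Type u₃}
  [Category.{v₁} A] [Category.{v₂} B] [Category.{v₃} C]

/-- An object of the lax pullback `L(F,G)`: a tuple `(a, b, c, α : F a ⟶ c, β : G b ⟶ c)`. -/
structure LaxPullback (F : A ⥤ C) (G : B ⥤ C) where
  a : A
  b : B
  c : C
  α : F.obj a ⟶ c
  β : G.obj b ⟶ c

/-- A morphism in the lax pullback: a triple `(f, g, h)` making both squares commute. -/
@[ext]
structure LaxPullbackHom {F : A ⥤ C} {G : B ⥤ C} (o o' : LaxPullback F G) where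
  f : o.a ⟶ o'.a
  g : o.b ⟶ o'.b
  h : o.c ⟶ o'.c
  wα : o.α ≫ h = F.map f ≫ o'.α
  wβ : o.β ≫ h = G.map g ≫ o'.β

attribute [simp] LaxPullbackHom.wα LaxPullbackHom.wβ

instance {F : A ⥤ C} {G : B ⥤ C} : Category (LaxPullback F G) where
  Hom := LaxPullbackHom
  id o := { f := 𝟙 o.a, g := 𝟙 o.b, h := 𝟙 o.c, wα := by simp, wβ := by simp }
  comp φ ψ :=
    { f := φ.f ≫ ψ.f, g := φ.g ≫ ψ.g, h := φ.h ≫ ψ.h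
      wα := by rw [← Category.assoc, φ.wα, Category.assoc, ψ.wα, Functor.map_comp,
        Category.assoc]
      wβ := by rw [← Category.assoc, φ.wβ, Category.assoc, ψ.wβ, Functor.map_comp,
        Category.assoc] }
  id_comp φ := by apply LaxPullbackHom.ext <;> simp
  comp_id φ := by apply LaxPullbackHom.ext <;> simp
  assoc φ ψ χ := by apply LaxPullbackHom.ext <;> simp

/-! When `β` is invertible, the component `h` of a morphism is forced by `g`,
namely `h = β⁻¹ ≫ G g ≫ β'`, and `(a, b, c, α, β)` is determined up to isomorphism by
`α ≫ β⁻¹ : F a ⟶ G b`. So forgetting `c` and `h` is fully faithful on the subcategory, and it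
is essentially surjective because every `(a, b, φ)` comes from `(a, b, G b, φ, 𝟙)`. -/

namespace LaxPullbackHom

variable {F : A ⥤ C} {G : B ⥤ C} {o o' : LaxPullback F G}

lemma h_eq_inv_comp (φ : LaxPullbackHom o o') [IsIso o.β] :
    φ.h = inv o.β ≫ G.map φ.g ≫ o'.β := by
  rw [IsIso.eq_inv_comp, φ.wβ]

noncomputable def ofCommaHom [IsIso o.β] [IsIso o'.β] (f : o.a ⟶ o'.a) (g : o.b ⟶ o'.b)
    (w : F.map f ≫ o'.α ≫ inv o'.β = (o.α ≫ inv o.β) ≫ G.map g) : LaxPullbackHom o o' where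
  f := f
  g := g
  h := inv o.β ≫ G.map g ≫ o'.β
  wα := by
    rw [← Category.assoc, ← Category.assoc, ← w]
    simp
  wβ := by simp

end LaxPullbackHom

namespace LaxPullback

variable (F : A ⥤ C) (G : B ⥤ C)

abbrev IsoβSubcategory :=
  ObjectProperty.FullSubcategory fun o : LaxPullback F G => IsIso o.β

variable {F G}

instance (o : IsoβSubcategory F G) : IsIso o.obj.β := o.property

variable (F G)

noncomputable def toComma : IsoβSubcategory F G ⥤ Comma F G where
  obj o := ⟨o.obj.a, o.obj.b, o.obj.α ≫ inv o.obj.β⟩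
  map {o o'} φ :=
    { left := φ.hom.f
      right := φ.hom.g
      w := by
        rw [← Category.assoc, ← φ.hom.wα, φ.hom.h_eq_inv_comp]
        simp }

noncomputable def toCommaFullyFaithful : (toComma F G).FullyFaithful where
  preimage φ := ObjectProperty.homMk (LaxPullbackHom.ofCommaHom φ.left φ.right φ.w)
  preimage_map φ := by
    apply ObjectProperty.hom_ext
    apply LaxPullbackHom.ext
    · rfl
    · rfl
    · exact φ.hom.h_eq_inv_comp.symm

def ofComma (x : Comma F G) : IsoβSubcategory F G :=
  ⟨⟨x.left, x.right, G.obj x.right, x.hom, 𝟙 _⟩, inferInstanceAs (IsIso (𝟙 _))⟩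

lemma toComma_obj_ofComma (x : Comma F G) : (toComma F G).obj (ofComma F G x) = x := by
  simp [toComma, ofComma]

instance : (toComma F G).EssSurj where
  mem_essImage x := ⟨ofComma F G x, ⟨eqToIso (toComma_obj_ofComma F G x)⟩⟩

instance : (toComma F G).IsEquivalence where
  faithful := (toCommaFullyFaithful F G).faithful
  full := (toCommaFullyFaithful F G).full

end LaxPullback

/-- The full subcategory of the lax pullback `L(F,G)` spanned by the objects whose structure
map `β : G b ⟶ c` is an isomorphism is equivalent to the comma category `Comma F G`. -/
theorem laxPullback_beta_iso_equiv_comma (F : A ⥤ C) (G : B ⥤ C) :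
    Nonempty ((ObjectProperty.FullSubcategory fun o : LaxPullback F G => IsIso o.β) ≌ Comma F G) :=
  ⟨(LaxPullback.toComma F G).asEquivalence⟩
end

section
/- Let p : X ⥤ D be a Grothendieck fibration and let x, y be objects of X with x initial in the fiber p⁻¹(p x) and y initial in the fiber p⁻¹(p y). Then for every morphism g : p x ⟶ p y in D there exists a unique morphism h : x ⟶ y in X with p h = g. -/
open CategoryTheory Limits

/-- Let `p : X ⥤ D` be a Grothendieck fibration and let `x`, `y` be objects of `X` that are
initial in their respective fibers. Then every morphism `g : p x ⟶ p y` in `D` has a unique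
lift `h : x ⟶ y` with `p h = g`. -/
theorem unique_lift_of_fiberwise_initial {X D : Type*} [Category X] [Category D]
    (p : X ⥤ D) [p.IsPreFibered] (x y : X)
    (hx : Nonempty (IsInitial (Functor.Fiber.mk (rfl : p.obj x = p.obj x))))
    (hy : Nonempty (IsInitial (Functor.Fiber.mk (rfl : p.obj y = p.obj y))))
    (g : p.obj x ⟶ p.obj y) :
    ∃! h : x ⟶ y, p.map h = g := by
  obtain ⟨b, φ, hφ⟩ := CategoryTheory.IsPreFibered.exists_isCartesian p rfl g
  have hb : p.obj b = p.obj x := CategoryTheory.IsHomLift.domain_eq p g φ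
  obtain ⟨hx⟩ := hx
  -- the unique morphism `x ⟶ b` in the fiber, given by initiality
  let τf : Functor.Fiber.mk (rfl : p.obj x = p.obj x) ⟶ Functor.Fiber.mk hb := hx.to _
  let τ : x ⟶ b := τf.1
  have hτ : p.IsHomLift (𝟙 (p.obj x)) τ := τf.2
  refine ⟨τ ≫ φ, ?_, ?_⟩
  · have : p.IsHomLift (𝟙 (p.obj x) ≫ g) (τ ≫ φ) := by
      haveI := hτ
      haveI := hφ.toIsHomLift
      infer_instance
    rw [Category.id_comp] at this
    exact (CategoryTheory.IsHomLift.eq_of_isHomLift p g (τ ≫ φ)).symm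
  · intro h hh
    have hh' : p.IsHomLift g h := hh ▸ inferInstance
    obtain ⟨χ, ⟨hχ1, hχ2⟩, _⟩ := hφ.universal_property h
    have key : Functor.Fiber.homMk p (p.obj x) χ = Functor.Fiber.homMk p (p.obj x) τ := by
      apply hx.hom_ext
    have : χ = τ := congrArg Subtype.val key
    rw [← hχ2, this]
end
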